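/- arXiv:2401.15988 — 3 statements merged into one kernel-verified Lean document; each statement's English description precedes it below -/
import Mathlib

section
/- For integers n ≥ 1, d > n, and h ≥ 1, setting h₀ = d - n and c(m,k) = (m-1+k)!/((m-1)!·k!) = C(m-1+k, k), one has h₀·c(n,h) - (d-1)·c(n,h-1) = (h₀ - h)·c(n-1,h). -/
/-- Key counting identity (Lemma 3): with `h₀ = d - n` and `c(m,k) = C(m-1+k, k)`,
`h₀·c(n,h) - (d-1)·c(n,h-1) = (h₀-h)·c(n-1,h)`. -/
theorem stmt0 (n d h : ℕ) (hn : 1 ≤ n) (hd : n < d) (hh : 1 ≤ h) :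
    ((d : ℤ) - n) * ((n + h - 1).choose h : ℤ)
      - ((d : ℤ) - 1) * ((n + h - 2).choose (h - 1) : ℤ)
    = ((d : ℤ) - n - h) * ((n + h - 2).choose h : ℤ) := by
  obtain ⟨m, rfl⟩ := Nat.exists_eq_add_of_le hn
  obtain ⟨k, rfl⟩ := Nat.exists_eq_add_of_le hh
  have e1 : 1 + m + (1 + k) - 1 = (m + k) + 1 := by omega
  have e2 : 1 + m + (1 + k) - 2 = m + k := by omega
  have e3 : 1 + k - 1 = k := by omega
  rw [e1, e2, e3, Nat.add_comm 1 k]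
  have p : (m + k + 1).choose (k + 1) = (m + k).choose k + (m + k).choose (k + 1) := by
    rw [Nat.choose_succ_succ]
  have q : (m + k).choose (k + 1) * (k + 1) = (m + k).choose k * m := by
    rw [Nat.choose_succ_right_eq]
    congr 1
    omega
  have p' : ((m + k + 1).choose (k + 1) : ℤ) = (m + k).choose k + (m + k).choose (k + 1) := by
    exact_mod_cast congrArg (Nat.cast : ℕ → ℤ) p
  have q' : ((m + k).choose (k + 1) : ℤ) * (k + 1) = (m + k).choose k * m := by
    exact_mod_cast congrArg (Nat.cast : ℕ → ℤ) q
  have hkey : (1 + k) * ((m + k).choose (k + 1) : ℤ) = m * (m + k).choose k := by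
    linarith [q']
  push_cast
  nlinarith [p', hkey]
end

section
/- Let V₁,...,V_n be a frame with dual coframe (αᵢ), structure functions [Vᵢ,Vⱼ] = ∑_k C_{ij}^k V_k, Λ = α₁∧...∧α_n, and Λᵢ = (-1)^{i+1} α₁∧...∧ α̂ᵢ ∧...∧α_n. Then dΛᵢ = φᵢ·Λ where φᵢ = ∑_{j<i} C_{ji}^j - ∑_{i<j} C_{ij}^j. -/
open Matrix

noncomputable def detCM (n : ℕ) : ContinuousMultilinearMap ℝ (fun _ : Fin n => (Fin n → ℝ)) ℝ :=
  (Matrix.detRowAlternating : (Fin n → ℝ) [⋀^Fin n]→ₗ[ℝ] ℝ).toMultilinearMap.mkContinuous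
    (n.factorial) (by
      intro m
      show ‖Matrix.det (Matrix.of m)‖ ≤ _
      rw [Matrix.det_apply]
      calc ‖∑ σ : Equiv.Perm (Fin n), Equiv.Perm.sign σ • ∏ i, Matrix.of m (σ i) i‖
          ≤ ∑ σ : Equiv.Perm (Fin n), ‖Equiv.Perm.sign σ • ∏ i, Matrix.of m (σ i) i‖ :=
            norm_sum_le _ _
        _ ≤ ∑ σ : Equiv.Perm (Fin n), ∏ i, ‖m i‖ := by
            apply Finset.sum_le_sum
            intro σ _
            have hs : ‖Equiv.Perm.sign σ • ∏ i, Matrix.of m (σ i) i‖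
                = ‖∏ i, m (σ i) i‖ := by
              rcases Int.units_eq_one_or (Equiv.Perm.sign σ) with h | h <;>
                simp [h, Units.smul_def, Matrix.of_apply]
            rw [hs]
            calc ‖∏ i, m (σ i) i‖ = ∏ i, ‖m (σ i) i‖ := by rw [norm_prod]
              _ ≤ ∏ i, ‖m (σ i)‖ := by
                  apply Finset.prod_le_prod (fun _ _ => norm_nonneg _)
                  intro i _
                  exact norm_le_pi_norm (m (σ i)) i
              _ = ∏ i, ‖m i‖ := Equiv.prod_comp σ (fun i => ‖m i‖)
        _ = n.factorial * ∏ i, ‖m i‖ := by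
            rw [Finset.sum_const, Finset.card_univ, Fintype.card_perm]
            simp [nsmul_eq_mul]
      )

theorem hasFDerivAt_det_rows {E : Type*} [NormedAddCommGroup E] [NormedSpace ℝ E] {n : ℕ}
    {g : Fin n → E → (Fin n → ℝ)} {g' : Fin n → (E →L[ℝ] (Fin n → ℝ))} {x : E}
    (h : ∀ p, HasFDerivAt (g p) (g' p) x) :
    HasFDerivAt (fun y => Matrix.det (Matrix.of fun p q => g p y q))
      (∑ p, ((detCM n).toContinuousLinearMap (fun p' => g p' x) p) ∘L (g' p)) x := by
  exact HasFDerivAt.multilinear_comp (f := detCM n) h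

theorem fderiv_det_rows_apply {E : Type*} [NormedAddCommGroup E] [NormedSpace ℝ E] {n : ℕ}
    {g : Fin n → E → (Fin n → ℝ)} {g' : Fin n → (E →L[ℝ] (Fin n → ℝ))} {x : E}
    (h : ∀ p, HasFDerivAt (g p) (g' p) x) (u : E) :
    fderiv ℝ (fun y => Matrix.det (Matrix.of fun p q => g p y q)) x u
      = ∑ p, Matrix.det ((Matrix.of fun p' q => g p' x q).updateRow p (g' p u)) := by
  rw [(hasFDerivAt_det_rows h).fderiv]
  simp only [ContinuousLinearMap.sum_apply, ContinuousLinearMap.comp_apply,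
    ContinuousMultilinearMap.toContinuousLinearMap_apply]
  rfl


lemma swapCR {I J : Type*} [DecidableEq I] [DecidableEq J] (X : Matrix I J ℝ) (c : J) (k : I)
    (W : I → ℝ) (r : J → ℝ) :
    (X.updateCol c W).updateRow k r
      = (X.updateRow k r).updateCol c (Function.update W k (r c)) := by
  ext a bb
  by_cases ha : a = k <;> by_cases hb : bb = c <;>
    simp [ha, hb, Matrix.updateRow_apply, Matrix.updateCol_apply, Function.update_apply]

lemma det_updateRow_single {n : ℕ} (B : Matrix (Fin (n+1)) (Fin (n+1)) ℝ) (k i : Fin (n+1)) :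
    (B.updateRow k (Pi.single i 1)).det
      = (-1:ℝ)^((k:ℕ)+(i:ℕ)) * (B.submatrix k.succAbove i.succAbove).det := by
  rw [← Matrix.adjugate_apply, Matrix.adjugate_fin_succ_eq_det_submatrix]

lemma det_updateCol_single {n : ℕ} (X : Matrix (Fin (n+1)) (Fin (n+1)) ℝ) (k c : Fin (n+1)) :
    (X.updateCol c (Pi.single k 1)).det
      = (-1:ℝ)^((k:ℕ)+(c:ℕ)) * (X.submatrix k.succAbove c.succAbove).det := by
  rw [Matrix.det_succ_column _ c, Fintype.sum_eq_single k]
  · simp [Matrix.updateCol_self, Matrix.submatrix_updateCol_succAbove]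
  · intro a ha
    simp [Matrix.updateCol_self, Pi.single_eq_of_ne ha]

theorem keyRow {n : ℕ} (A : Matrix (Fin (n+1)) (Fin (n+1)) ℝ)
    (b : Fin (n+1) → Fin (n+1) → Fin (n+1) → ℝ) (i : Fin (n+1)) :
    ∑ k : Fin (n+1), (-1:ℝ)^((k:ℕ)+(i:ℕ)) *
      ∑ p : Fin n, ((A.submatrix i.succAbove k.succAbove).updateRow p
          (fun q => -∑ m, ∑ l, A m (k.succAbove q) * A l k * b m l (i.succAbove p))).det
    = (∑ l, b i l l - ∑ m, b m i m) * A.det := by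
  classical
  set S := Aᵀ with hS
  set G : Fin (n+1) → Fin (n+1) → Fin (n+1) → ℝ := fun k m c' => -∑ l, S k l * b m l c' with hG
  set Y : Fin (n+1) → Fin (n+1) → (Fin (n+1) → ℝ) :=
    fun k c' => fun q => ∑ m, S q m * G k m c' with hY
  set κ : Fin (n+1) → Fin (n+1) → ℝ :=
    fun k c' => (S.updateCol c' (Pi.single k 1)).det with hκ
  set dM : Fin (n+1) → ℝ := fun k => (S.updateRow k (Pi.single i 1)).det with hdM
  set F : Fin (n+1) → Fin (n+1) → ℝ :=
    fun k c' => ((S.updateCol c' (Y k c')).updateRow k (Pi.single i 1)).det with hF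
  -- κ at i equals dM
  have hκi : ∀ k, κ k i = dM k := by
    intro k
    simp only [hκ, hdM]
    rw [det_updateCol_single, det_updateRow_single]
  -- step 1 : identify the summands with F
  have step1 : ∀ (k : Fin (n+1)) (p : Fin n),
      (-1:ℝ)^((k:ℕ)+(i:ℕ)) * ((A.submatrix i.succAbove k.succAbove).updateRow p
          (fun q => -∑ m, ∑ l, A m (k.succAbove q) * A l k * b m l (i.succAbove p))).det
      = F k (i.succAbove p) := by
    intro k p
    have hw : (fun q => -∑ m, ∑ l, A m (k.succAbove q) * A l k * b m l (i.succAbove p))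
        = fun q => Y k (i.succAbove p) (k.succAbove q) := by
      funext q
      rw [hY]
      simp only [hG, hS, Matrix.transpose_apply, mul_neg, mul_comm, Finset.mul_sum]
      rw [← Finset.sum_neg_distrib]
      refine Finset.sum_congr rfl fun m _ => ?_
      rw [← Finset.sum_neg_distrib, ← Finset.sum_neg_distrib]
      refine Finset.sum_congr rfl fun l _ => ?_
      ring
    rw [hw]
    have htr : ((A.submatrix i.succAbove k.succAbove).updateRow p
          (fun q => Y k (i.succAbove p) (k.succAbove q))).det
        = ((S.submatrix k.succAbove i.succAbove).updateCol p
          (fun q => Y k (i.succAbove p) (k.succAbove q))).det := by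
      rw [← Matrix.det_transpose]
      congr 1
      ext a c
      by_cases h : c = p <;>
        simp [h, Matrix.updateRow_apply, Matrix.updateCol_apply, hS,
          Matrix.transpose_apply, Matrix.submatrix_apply]
    rw [htr]
    have hsub : ((S.updateCol (i.succAbove p) (Y k (i.succAbove p))).submatrix
          k.succAbove i.succAbove)
        = (S.submatrix k.succAbove i.succAbove).updateCol p
          (fun q => Y k (i.succAbove p) (k.succAbove q)) := by
      ext a c
      by_cases h : c = p
      · subst h
        simp [Matrix.updateCol_apply, Matrix.submatrix_apply]
      · have hne : i.succAbove c ≠ i.succAbove p :=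
          fun hh => h (Fin.succAbove_right_injective hh)
        simp [Matrix.updateCol_apply, Matrix.submatrix_apply, hne, h]
    simp only [hF]
    rw [det_updateRow_single, hsub]
  -- step 2 : closed form of F
  have step2 : ∀ (k c' : Fin (n+1)),
      F k c' = G k c' c' * dM k - G k i c' * κ k c'
        + (if c' = i then κ k c' else 0) := by
    intro k c'
    simp only [hF]
    rw [swapCR]
    have hupd : Function.update (Y k c') k ((Pi.single i (1:ℝ) : Fin (n+1) → ℝ) c')
        = (fun q => Y k c' q) + ((Pi.single i (1:ℝ) : Fin (n+1) → ℝ) c' - Y k c' k) •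
            (Pi.single k (1:ℝ) : Fin (n+1) → ℝ) := by
      funext q
      by_cases h : q = k <;>
        · simp [h, Function.update_apply, Pi.single_apply]
          try ring
    rw [hupd, ← Matrix.cramer_apply, map_add, _root_.map_smul]
    have hYsum : (fun q => Y k c' q) = ∑ m, G k m c' • (fun q => S q m) := by
      funext q
      simp [hY, Finset.sum_apply, mul_comm]
    rw [hYsum, map_sum]
    simp only [_root_.map_smul]
    have hcol : ∀ m : Fin (n+1), (fun q => S q m)
        = (fun q => (S.updateRow k (Pi.single i 1)) q m)
          + (S k m - (Pi.single i (1:ℝ) : Fin (n+1) → ℝ) m) • (Pi.single k (1:ℝ) : Fin (n+1) → ℝ) := by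
      intro m
      funext q
      by_cases h : q = k <;>
        · simp [h, Matrix.updateRow_apply, Pi.single_apply]
          try ring
    have hcM : ∀ m : Fin (n+1),
        (S.updateRow k (Pi.single i 1)).cramer (fun q => (S.updateRow k (Pi.single i 1)) q m)
        = Pi.single m (S.updateRow k (Pi.single i 1)).det := fun m =>
      Matrix.cramer_row_self _ _ m (fun j => rfl)
    have hcκ : (S.updateRow k (Pi.single i 1)).cramer (Pi.single k (1:ℝ)) c' = κ k c' := by
      rw [Matrix.cramer_apply, det_updateCol_single]
      simp only [hκ]
      rw [det_updateCol_single, Matrix.submatrix_updateRow_succAbove]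
    have hdMk : (S.updateRow k (Pi.single i 1)).det = dM k := rfl
    simp only [hcol, map_add, _root_.map_smul, hcM, Pi.add_apply, Finset.sum_apply,
      Pi.smul_apply, smul_eq_mul, hcκ, hdMk, Pi.single_apply, hY]
    simp only [mul_add, mul_sub, sub_mul, ite_mul, mul_ite, mul_zero, zero_mul, mul_one,
      one_mul, Finset.sum_add_distrib, Finset.sum_sub_distrib, Finset.sum_ite_eq,
      Finset.sum_ite_eq', Finset.mem_univ, if_true, Finset.sum_mul]
    ring_nf
    rw [Finset.sum_congr rfl (fun x _ => by ring :
      ∀ x ∈ Finset.univ, G k x c' * S k x * κ k c' = κ k c' * S k x * G k x c')]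
    ring
  -- step 4 : k-sums
  have hdMsum : ∀ l, (∑ k, S k l * dM k) = (if i = l then A.det else 0) := by
    have hadj : ∀ k, dM k = S.adjugate i k := fun k => (Matrix.adjugate_apply S i k).symm
    intro l
    calc ∑ k, S k l * dM k = ∑ k, S.adjugate i k * S k l := by
          refine Finset.sum_congr rfl fun k _ => ?_
          rw [hadj k, mul_comm]
      _ = (S.adjugate * S) i l := (Matrix.mul_apply).symm
      _ = (S.det • (1 : Matrix (Fin (n+1)) (Fin (n+1)) ℝ)) i l := by
          rw [Matrix.adjugate_mul]
      _ = (if i = l then A.det else 0) := by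
          simp [Matrix.one_apply, hS, Matrix.det_transpose]
  have hκsum : ∀ l c', (∑ k, S k l * κ k c') = (if l = c' then A.det else 0) := by
    intro l c'
    have e2 : (fun q => S q l) = ∑ k, S k l • (Pi.single k (1:ℝ) : Fin (n+1) → ℝ) := by
      funext q
      simp [Finset.sum_apply, Pi.single_apply, Finset.sum_ite_eq]
    have e1 : (∑ k, S k l * κ k c') = (S.cramer (fun q => S q l)) c' := by
      rw [e2, map_sum]
      simp only [_root_.map_smul, Finset.sum_apply, Pi.smul_apply, smul_eq_mul]
      rfl
    rw [e1, Matrix.cramer_row_self S (fun q => S q l) l (fun j => rfl), Pi.single_apply]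
    simp [eq_comm, hS, Matrix.det_transpose]
  -- T1 and T2
  have T1 : ∀ c', (∑ k, G k c' c' * dM k) = -(b c' i c' * A.det) := by
    intro c'
    have : (∑ k, G k c' c' * dM k) = -∑ l, b c' l c' * ∑ k, S k l * dM k := by
      simp only [hG, neg_mul, Finset.sum_neg_distrib, Finset.sum_mul, Finset.mul_sum]
      rw [Finset.sum_comm]
      congr 1
      refine Finset.sum_congr rfl fun l _ => Finset.sum_congr rfl fun k _ => by ring
    rw [this]
    simp [hdMsum, mul_ite, Finset.sum_ite_eq]
  have T2 : ∀ c', (∑ k, G k i c' * κ k c') = -(b i c' c' * A.det) := by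
    intro c'
    have : (∑ k, G k i c' * κ k c') = -∑ l, b i l c' * ∑ k, S k l * κ k c' := by
      simp only [hG, neg_mul, Finset.sum_neg_distrib, Finset.sum_mul, Finset.mul_sum]
      rw [Finset.sum_comm]
      congr 1
      refine Finset.sum_congr rfl fun l _ => Finset.sum_congr rfl fun k _ => by ring
    rw [this]
    simp [hκsum, mul_ite, Finset.sum_ite_eq']
  -- value of F at i
  have hFi : ∀ k, F k i = dM k := by
    intro k
    rw [step2 k i, hκi k]
    simp
  -- assemble
  calc ∑ k : Fin (n+1), (-1:ℝ)^((k:ℕ)+(i:ℕ)) *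
      ∑ p : Fin n, ((A.submatrix i.succAbove k.succAbove).updateRow p
          (fun q => -∑ m, ∑ l, A m (k.succAbove q) * A l k * b m l (i.succAbove p))).det
      = ∑ k, ∑ p : Fin n, F k (i.succAbove p) := by
        refine Finset.sum_congr rfl fun k _ => ?_
        rw [Finset.mul_sum]
        exact Finset.sum_congr rfl fun p _ => step1 k p
    _ = ∑ k, ((∑ c', F k c') - F k i) := by
        refine Finset.sum_congr rfl fun k _ => ?_
        rw [Fin.sum_univ_succAbove (fun c' => F k c') i]
        ring
    _ = ∑ k, ((∑ c', (G k c' c' * dM k - G k i c' * κ k c' + if c' = i then κ k c' else 0)) - dM k) := by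
        refine Finset.sum_congr rfl fun k _ => ?_
        rw [hFi k]
        congr 1
        exact Finset.sum_congr rfl fun c' _ => step2 k c'
    _ = ∑ k, ((∑ c', G k c' c' * dM k) - (∑ c', G k i c' * κ k c')) := by
        refine Finset.sum_congr rfl fun k _ => ?_
        rw [Finset.sum_add_distrib, Finset.sum_sub_distrib,
          Finset.sum_ite_eq' Finset.univ i (fun c' => κ k c')]
        simp only [Finset.mem_univ, if_true, hκi k]
        ring
    _ = (∑ c', ∑ k, G k c' c' * dM k) - (∑ c', ∑ k, G k i c' * κ k c') := by
        rw [Finset.sum_sub_distrib, Finset.sum_comm (f := fun k c' => G k c' c' * dM k),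
          Finset.sum_comm (f := fun k c' => G k i c' * κ k c')]
    _ = (∑ c', -(b c' i c' * A.det)) - (∑ c', -(b i c' c' * A.det)) := by
        rw [Finset.sum_congr rfl fun c' _ => T1 c', Finset.sum_congr rfl fun c' _ => T2 c']
    _ = (∑ l, b i l l - ∑ m, b m i m) * A.det := by
        simp only [Finset.sum_neg_distrib, Finset.sum_mul, sub_mul]
        ring


/-- For a smooth frame `(V₀,...,V_n)` (dimension `n+1`) with dual coframe `(αᵢ)` and structure
functions `[Vᵢ,Vⱼ] = ∑_k C_{ij}^k V_k`, the `(n)`-form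
`Λᵢ = (-1)^i α₀ ∧ ... ∧ α̂ᵢ ∧ ... ∧ α_n` (wedge realized as a determinant) satisfies
`dΛᵢ = φᵢ Λ` with `φᵢ = ∑_{j<i} C_{ji}^j - ∑_{i<j} C_{ij}^j`; the exterior derivative is
expressed by its evaluation on an arbitrary tuple of constant vectors `v` via the alternating
sum of directional derivatives. -/
theorem stmt14 (n : ℕ)
    (V : Fin (n + 1) → (Fin (n + 1) → ℝ) → (Fin (n + 1) → ℝ))
    (α : Fin (n + 1) → (Fin (n + 1) → ℝ) → ((Fin (n + 1) → ℝ) →L[ℝ] ℝ))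
    (C : Fin (n + 1) → Fin (n + 1) → Fin (n + 1) → (Fin (n + 1) → ℝ) → ℝ)
    (hV : ∀ i, ContDiff ℝ (⊤ : ℕ∞) (V i))
    (hα : ∀ k, ContDiff ℝ (⊤ : ℕ∞) (α k))
    (hframe : ∀ x, LinearIndependent ℝ (fun i => V i x))
    (hdual : ∀ i j x, α i x (V j x) = if i = j then (1 : ℝ) else 0)
    (hC : ∀ i j x,
      fderiv ℝ (V j) x (V i x) - fderiv ℝ (V i) x (V j x) = ∑ k, C i j k x • V k x)
    (i : Fin (n + 1)) (x : Fin (n + 1) → ℝ) (v : Fin (n + 1) → (Fin (n + 1) → ℝ)) :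
    ∑ k : Fin (n + 1), (-1 : ℝ) ^ (k : ℕ) *
        fderiv ℝ (fun y => (-1 : ℝ) ^ (i : ℕ) *
          Matrix.det (Matrix.of fun p q : Fin n =>
            α (i.succAbove p) y (v (k.succAbove q)))) x (v k)
      = (∑ j ∈ Finset.univ.filter (fun j => j < i), C j i j x
          - ∑ j ∈ Finset.univ.filter (fun j => i < j), C i j j x)
        * Matrix.det (Matrix.of fun p q : Fin (n + 1) => α p x (v q)) := by
  classical
  set b : Fin (n+1) → Fin (n+1) → Fin (n+1) → ℝ :=
    fun m l p => α p x (fderiv ℝ (V m) x (V l x)) with hb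
  set A : Matrix (Fin (n+1)) (Fin (n+1)) ℝ := Matrix.of fun m c => α m x (v c) with hA
  -- basis expansion
  have hexp : ∀ w : Fin (n+1) → ℝ, w = ∑ m, α m x w • V m x := by
    intro w
    have hcard : Fintype.card (Fin (n+1)) = Module.finrank ℝ (Fin (n+1) → ℝ) := by
      simp [Module.finrank_fintype_fun_eq_card]
    let B := basisOfLinearIndependentOfCardEqFinrank (hframe x) hcard
    have hB : ⇑B = fun m => V m x := coe_basisOfLinearIndependentOfCardEqFinrank _ _
    have hc : ∀ j, α j x w = B.repr w j := by
      intro j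
      conv_lhs => rw [← B.sum_repr w]
      rw [map_sum]
      simp only [_root_.map_smul, hB, smul_eq_mul, hdual]
      simp [Finset.sum_ite_eq]
    calc w = ∑ m, B.repr w m • B m := (B.sum_repr w).symm
      _ = ∑ m, α m x w • V m x := by
          refine Finset.sum_congr rfl fun m _ => ?_
          rw [hc m, hB]
  have hDV : ∀ (m : Fin (n+1)) (u : Fin (n+1) → ℝ) (p : Fin (n+1)),
      α p x (fderiv ℝ (V m) x u) = ∑ l, α l x u * b m l p := by
    intro m u p
    conv_lhs => rw [show u = ∑ l, α l x u • V l x from hexp u]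
    rw [map_sum, map_sum]
    refine Finset.sum_congr rfl fun l _ => ?_
    rw [_root_.map_smul, _root_.map_smul]
    simp [hb]
  have hαV : ∀ (p j : Fin (n+1)) (u : Fin (n+1) → ℝ),
      (fderiv ℝ (α p) x u) (V j x) = - α p x (fderiv ℝ (V j) x u) := by
    intro p j u
    have h1 : HasFDerivAt (fun y => α p y (V j y))
        ((α p x).comp (fderiv ℝ (V j) x) + (fderiv ℝ (α p) x).flip (V j x)) x :=
      (((hα p).differentiable (by simp) x).hasFDerivAt).clm_apply
        (((hV j).differentiable (by simp) x).hasFDerivAt)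
    have h2 : (fun y => α p y (V j y)) = fun _ : Fin (n+1) → ℝ => (if p = j then (1:ℝ) else 0) :=
      funext fun y => hdual p j y
    rw [h2] at h1
    have h3 := h1.unique (hasFDerivAt_const _ _)
    have h4 := congrFun (congrArg
      (fun (L : (Fin (n+1) → ℝ) →L[ℝ] ℝ) => (L : (Fin (n+1) → ℝ) → ℝ)) h3) u
    simp only [ContinuousLinearMap.add_apply, ContinuousLinearMap.comp_apply,
      ContinuousLinearMap.flip_apply, ContinuousLinearMap.zero_apply] at h4
    linarith
  have hDα : ∀ (p : Fin (n+1)) (u w : Fin (n+1) → ℝ),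
      (fderiv ℝ (α p) x u) w = -∑ m, ∑ l, α m x w * α l x u * b m l p := by
    intro p u w
    conv_lhs => rw [show w = ∑ m, α m x w • V m x from hexp w]
    rw [map_sum, ← Finset.sum_neg_distrib]
    refine Finset.sum_congr rfl fun m _ => ?_
    rw [_root_.map_smul, smul_eq_mul, hαV, hDV, ← Finset.sum_neg_distrib, Finset.mul_sum,
      ← Finset.sum_neg_distrib]
    refine Finset.sum_congr rfl fun l _ => by ring
  -- derivative of the inner determinant
  have hgk : ∀ (k : Fin (n+1)) (p : Fin n),
      HasFDerivAt (fun y => fun q : Fin n => α (i.succAbove p) y (v (k.succAbove q)))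
        (ContinuousLinearMap.pi fun q : Fin n =>
          (fderiv ℝ (α (i.succAbove p)) x).flip (v (k.succAbove q))) x := by
    intro k p
    apply hasFDerivAt_pi.2
    intro q
    have hc := ((hα (i.succAbove p)).differentiable (by simp) x).hasFDerivAt
    have h2 := hc.clm_apply (hasFDerivAt_const (v (k.succAbove q)) x)
    simpa using h2
  have hval : ∀ k : Fin (n+1),
      fderiv ℝ (fun y => (-1:ℝ)^(i:ℕ) * Matrix.det (Matrix.of fun p q : Fin n =>
          α (i.succAbove p) y (v (k.succAbove q)))) x (v k)
      = (-1:ℝ)^(i:ℕ) * ∑ p : Fin n, ((A.submatrix i.succAbove k.succAbove).updateRow p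
          (fun q => -∑ m, ∑ l, A m (k.succAbove q) * A l k * b m l (i.succAbove p))).det := by
    intro k
    have hdet := hasFDerivAt_det_rows (hgk k)
    rw [fderiv_const_mul hdet.differentiableAt]
    rw [ContinuousLinearMap.smul_apply, smul_eq_mul]
    congr 1
    rw [fderiv_det_rows_apply (hgk k) (v k)]
    refine Finset.sum_congr rfl fun p _ => ?_
    congr 1
    have h1 : (Matrix.of fun p' q => α (i.succAbove p') x (v (k.succAbove q)))
        = A.submatrix i.succAbove k.succAbove := rfl
    have h2 : (ContinuousLinearMap.pi fun q : Fin n =>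
        (fderiv ℝ (α (i.succAbove p)) x).flip (v (k.succAbove q))) (v k)
        = fun q => -∑ m, ∑ l, A m (k.succAbove q) * A l k * b m l (i.succAbove p) := by
      funext q
      rw [ContinuousLinearMap.pi_apply, ContinuousLinearMap.flip_apply, hDα]
      rfl
    rw [h1, h2]
  -- connection between C and b
  have hCb : ∀ a c m : Fin (n+1), C a c m x = b c a m - b a c m := by
    intro a c m
    have h := congrArg (fun w => α m x w) (hC a c x)
    simp only [map_sub, map_sum, _root_.map_smul, smul_eq_mul, hdual] at h
    simp only [mul_ite, mul_one, mul_zero, Finset.sum_ite_eq, Finset.mem_univ, if_true] at h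
    exact h.symm
  -- final computation
  calc ∑ k : Fin (n + 1), (-1 : ℝ) ^ (k : ℕ) *
        fderiv ℝ (fun y => (-1 : ℝ) ^ (i : ℕ) *
          Matrix.det (Matrix.of fun p q : Fin n =>
            α (i.succAbove p) y (v (k.succAbove q)))) x (v k)
      = ∑ k : Fin (n+1), (-1:ℝ)^((k:ℕ)+(i:ℕ)) *
          ∑ p : Fin n, ((A.submatrix i.succAbove k.succAbove).updateRow p
            (fun q => -∑ m, ∑ l, A m (k.succAbove q) * A l k * b m l (i.succAbove p))).det := by
        refine Finset.sum_congr rfl fun k _ => ?_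
        rw [hval k, pow_add]
        ring
    _ = (∑ l, b i l l - ∑ m, b m i m) * A.det := keyRow A b i
    _ = (∑ j ∈ Finset.univ.filter (fun j => j < i), C j i j x
          - ∑ j ∈ Finset.univ.filter (fun j => i < j), C i j j x)
        * Matrix.det (Matrix.of fun p q : Fin (n + 1) => α p x (v q)) := by
        have hdet : A.det = Matrix.det (Matrix.of fun p q : Fin (n + 1) => α p x (v q)) := rfl
        rw [hdet]
        congr 1
        have h1 : ∀ j, C j i j x = b i j j - b j i j := fun j => hCb j i j
        have h2 : ∀ j, C i j j x = b j i j - b i j j := fun j => hCb i j j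
        rw [Finset.sum_congr rfl fun j _ => h1 j, Finset.sum_congr rfl fun j _ => h2 j]
        rw [← Finset.sum_sub_distrib]
        have h3 : ∑ j ∈ Finset.univ.filter (fun j => i < j), (b j i j - b i j j)
            = -∑ j ∈ Finset.univ.filter (fun j => i < j), (b i j j - b j i j) := by
          rw [← Finset.sum_neg_distrib]
          exact Finset.sum_congr rfl fun _ _ => by ring
        have hsplit : ∑ l, (b i l l - b l i l)
            = ∑ j ∈ Finset.univ.filter (fun j => j < i), (b i j j - b j i j)
              + ∑ j ∈ Finset.univ.filter (fun j => ¬ j < i), (b i j j - b j i j) :=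
          (Finset.sum_filter_add_sum_filter_not _ _ _).symm
        have hset : Finset.univ.filter (fun j => ¬ j < i)
            = insert i (Finset.univ.filter (fun j => i < j)) := by
          ext j
          simp only [Finset.mem_filter, Finset.mem_univ, true_and, Finset.mem_insert, not_lt]
          rw [Fin.le_def, Fin.lt_def, Fin.ext_iff]
          omega
        rw [hsplit, hset, Finset.sum_insert (by simp)]
        rw [h3]
        ring
end

section
/- Let V₁,...,V_d (d > n) be vector fields on an n-manifold with (V₁,...,V_n) a frame, V_a = ∑ᵢ f_{i,a} Vᵢ for a > n, and (αᵢ) the dual coframe. For λ ∈ {1,...,d}, a form η_λ = ∑ᵢ X_{i,λ} Λᵢ satisfies ι_{V_λ} η_λ = 0 if and only if f_{i,λ} X_{j,λ} - f_{j,λ} X_{i,λ} = 0 for all i < j (where f_{i,j} = δ_{ij} for j ≤ n). In particular, for λ = a > n this is equivalent to X_{i,a} = f_{i,a} X_{n,a} for all i, assuming f_{n,a} = 1, and for λ = j ≤ n it is equivalent to X_{i,j} = 0 for all i ≠ j. -/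
/-!
Evaluated on `(V_λ, w₁, …, w_m)`, the form `η_λ = ∑ᵢ X_{i,λ} Λᵢ` is the Laplace expansion of the
determinant with rows `X_{·,λ}`, `α(V_λ) = f_{·,λ}` and `α(w_q)`. Since the `α(w_q)` can be
arbitrary vectors, this vanishes identically iff `X_{·,λ}` and `f_{·,λ}` are linearly dependent
(an independent pair extends to a basis), i.e. iff all `2 × 2` minors vanish. When `f_{·,λ} ≠ 0`,
dependence means `X_{·,λ}` is a multiple of `f_{·,λ}`, which gives the two special cases.
-/

open Matrix

theorem LinearMap.pi_sum_smul_of_dual {K W ι : Type*} [CommSemiring K] [AddCommMonoid W]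
    [Module K W] [Fintype ι] [DecidableEq ι] (α : ι → W →ₗ[K] K) (v : ι → W)
    (hdual : ∀ i j, α i (v j) = if i = j then 1 else 0) (c : ι → K) :
    LinearMap.pi α (∑ j, c j • v j) = c := by
  ext i
  simp [hdual]

theorem det_of_cons_eq_sum {R : Type*} [CommRing R] {n : ℕ} (x : Fin (n + 1) → R)
    (A : Fin n → Fin (n + 1) → R) :
    det (of (Fin.cons x A)) =
      ∑ i, x i * ((-1) ^ (i : ℕ) * det (of fun p q => A q (i.succAbove p))) := by
  rw [det_succ_row_zero]
  refine Finset.sum_congr rfl fun i _ => ?_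
  have hminor : (of (Fin.cons x A)).submatrix Fin.succ i.succAbove =
      (of fun p q => A q (i.succAbove p))ᵀ := rfl
  rw [hminor, det_transpose, of_apply, Fin.cons_zero]
  ring

theorem exists_linearIndependent_cons_cons {K M : Type*} [DivisionRing K] [AddCommGroup M]
    [Module K M] {x y : M} (hxy : LinearIndependent K ![x, y]) :
    ∀ {m : ℕ}, m + 2 ≤ Module.finrank K M →
      ∃ g : Fin m → M, LinearIndependent K (Fin.cons x (Fin.cons y g) : Fin (m + 2) → M)
  | 0, _ => ⟨![], hxy⟩
  | m + 1, hm => by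
    obtain ⟨g, hg⟩ := exists_linearIndependent_cons_cons hxy (m := m) (by omega)
    obtain ⟨z, hz⟩ := exists_linearIndependent_snoc_of_lt_finrank hg (by omega)
    refine ⟨Fin.snoc g z, ?_⟩
    rwa [Fin.cons_snoc_eq_snoc_cons, Fin.cons_snoc_eq_snoc_cons]

theorem det_of_cons_cons_eq_zero_iff {K : Type*} [Field K] {m : ℕ} (x y : Fin (m + 2) → K) :
    (∀ g : Fin m → Fin (m + 2) → K, det (of (Fin.cons x (Fin.cons y g))) = 0) ↔
      ¬ LinearIndependent K ![x, y] := by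
  constructor
  · intro h hxy
    obtain ⟨g, hg⟩ := exists_linearIndependent_cons_cons hxy (m := m) (by simp)
    have hunit : IsUnit (of (Fin.cons x (Fin.cons y g))) :=
      linearIndependent_rows_iff_isUnit.mp hg
    exact ((isUnit_iff_isUnit_det _).mp hunit).ne_zero (h g)
  · intro hxy g
    apply det_eq_zero_of_not_linearIndependent_rows
    intro hrows
    have hpair : ![x, y] = (fun i => of (Fin.cons x (Fin.cons y g)) i) ∘ Fin.castLE (by omega) := by
      ext i
      fin_cases i <;> rfl
    exact hxy (hpair ▸ hrows.comp _ (Fin.castLE_injective _))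

theorem not_linearIndependent_pair_iff_exists_smul {K M : Type*} [DivisionRing K]
    [AddCommGroup M] [Module K M] {x y : M} (hy : y ≠ 0) :
    ¬ LinearIndependent K ![x, y] ↔ ∃ a : K, a • y = x := by
  rw [LinearIndependent.pair_symm_iff, LinearIndependent.pair_iff' hy]
  push Not
  rfl

section PairMinors

variable {K : Type*} [Field K]

theorem not_linearIndependent_pair_iff_minors_eq_zero {ι : Type*} [LinearOrder ι]
    {x y : ι → K} :
    ¬ LinearIndependent K ![x, y] ↔ ∀ i j, i < j → y i * x j - y j * x i = 0 := by
  have minors_antisymm : (∀ i j, i < j → y i * x j - y j * x i = 0) ↔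
      ∀ i j, y i * x j - y j * x i = 0 := by
    refine ⟨fun h i j => ?_, fun h i j _ => h i j⟩
    rcases lt_trichotomy i j with hij | rfl | hji
    · exact h i j hij
    · ring
    · linear_combination -h j i hji
  rw [minors_antisymm, LinearIndependent.pair_iff]
  push Not
  constructor
  · rintro ⟨s, t, hst, hne⟩ i j
    have hi : s * x i + t * y i = 0 := by simpa using congrFun hst i
    have hj : s * x j + t * y j = 0 := by simpa using congrFun hst j
    by_cases hs : s = 0
    · have ht_minor : t * (y i * x j - y j * x i) = 0 := by
        linear_combination x j * hi - x i * hj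
      exact (mul_eq_zero.mp ht_minor).resolve_left (hne hs)
    · have hs_minor : s * (y i * x j - y j * x i) = 0 := by
        linear_combination y i * hj - y j * hi
      exact (mul_eq_zero.mp hs_minor).resolve_left hs
  · intro h
    by_cases hy : y = 0
    · exact ⟨0, 1, by simp [hy], fun _ => one_ne_zero⟩
    · obtain ⟨k, hk⟩ := Function.ne_iff.mp hy
      refine ⟨y k, -x k, funext fun i => ?_, fun h0 => absurd h0 hk⟩
      simp only [Pi.add_apply, Pi.smul_apply, smul_eq_mul, neg_mul, Pi.zero_apply]
      linear_combination h k i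

theorem minors_eq_zero_iff_eq_mul_last {n : ℕ} {x y : Fin (n + 1) → K}
    (hlast : y (Fin.last n) = 1) :
    (∀ i j, i < j → y i * x j - y j * x i = 0) ↔ ∀ i, x i = y i * x (Fin.last n) := by
  have hy : y ≠ 0 := fun h => one_ne_zero (hlast.symm.trans (congrFun h _))
  rw [← not_linearIndependent_pair_iff_minors_eq_zero,
    not_linearIndependent_pair_iff_exists_smul hy]
  constructor
  · rintro ⟨a, rfl⟩ i
    simp [hlast, mul_comm]
  · exact fun h => ⟨x (Fin.last n), funext fun i => by simp [h i, mul_comm]⟩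

theorem minors_eq_zero_iff_of_eq_single {ι : Type*} [LinearOrder ι] {x y : ι → K} {k : ι}
    (hy : y = Pi.single k 1) :
    (∀ i j, i < j → y i * x j - y j * x i = 0) ↔ ∀ i, i ≠ k → x i = 0 := by
  subst hy
  rw [← not_linearIndependent_pair_iff_minors_eq_zero,
    not_linearIndependent_pair_iff_exists_smul (Pi.single_ne_zero_iff.mpr one_ne_zero)]
  constructor
  · rintro ⟨a, rfl⟩ i hi
    simp [hi]
  · intro h
    refine ⟨x k, funext fun i => ?_⟩
    by_cases hi : i = k
    · simp [hi]
    · simp [hi, h i hi]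

end PairMinors

/-- Indices are `0`-based and `n = m + 2`; `Λᵢ(V_λ, w₁, …, w_m)` is the signed minor of the
matrix `(αₖ(V_λ, w₁, …, w_m))ₖ` omitting the row of `αᵢ`. -/
theorem stmt15 {K W : Type*} [Field K] [AddCommGroup W] [Module K W]
    (m d : ℕ) (hd : m + 2 < d)
    (V : Fin d → W)
    (α : Fin (m + 2) → (W →ₗ[K] K))
    (hdual : ∀ i j : Fin (m + 2),
      α i (V (Fin.castLE hd.le j)) = if i = j then 1 else 0)
    (f : Fin (m + 2) → Fin d → K)
    (hδ : ∀ i j : Fin (m + 2),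
      f i (Fin.castLE hd.le j) = if i = j then 1 else 0)
    (hf : ∀ lam : Fin d, V lam = ∑ i, f i lam • V (Fin.castLE hd.le i))
    (X : Fin (m + 2) → Fin d → K) (lam : Fin d) :
    ((∀ w : Fin m → W,
        ∑ i : Fin (m + 2), X i lam * ((-1 : K) ^ (i : ℕ) *
          Matrix.det (Matrix.of fun p q : Fin (m + 1) =>
            α (i.succAbove p) ((Fin.cons (V lam) w : Fin (m + 1) → W) q))) = 0)
      ↔ (∀ i j : Fin (m + 2), i < j → f i lam * X j lam - f j lam * X i lam = 0))
    ∧ (m + 2 ≤ (lam : ℕ) → f (Fin.last (m + 1)) lam = 1 →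
        ((∀ i j : Fin (m + 2), i < j → f i lam * X j lam - f j lam * X i lam = 0)
          ↔ ∀ i, X i lam = f i lam * X (Fin.last (m + 1)) lam))
    ∧ ((lam : ℕ) < m + 2 →
        ((∀ i j : Fin (m + 2), i < j → f i lam * X j lam - f j lam * X i lam = 0)
          ↔ ∀ i : Fin (m + 2), (i : ℕ) ≠ (lam : ℕ) → X i lam = 0)) := by
  have hcoord := LinearMap.pi_sum_smul_of_dual α _ hdual
  have hVlam : LinearMap.pi α (V lam) = fun i => f i lam := hf lam ▸ hcoord _
  refine ⟨?_, fun _ hlast => minors_eq_zero_iff_eq_mul_last hlast, fun hlt => ?_⟩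
  · refine (forall_congr' fun w => Eq.congr_left
      (det_of_cons_eq_sum (fun i => X i lam) (LinearMap.pi α ∘ Fin.cons (V lam) w)).symm).trans ?_
    simp only [Fin.comp_cons, hVlam]
    rw [← not_linearIndependent_pair_iff_minors_eq_zero, ← det_of_cons_cons_eq_zero_iff]
    refine ⟨fun h g => ?_, fun h w => h _⟩
    obtain ⟨w, rfl⟩ := Function.Surjective.comp_left (fun c => ⟨_, hcoord c⟩) g
    exact h w
  · set k : Fin (m + 2) := ⟨lam, hlt⟩
    have hk : Fin.castLE hd.le k = lam := Fin.ext rfl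
    have hsingle : (fun i => f i lam) = Pi.single k 1 := funext fun i => by
      simpa [Pi.single_apply, hk] using hδ i k
    simpa [Fin.ext_iff] using minors_eq_zero_iff_of_eq_single (x := fun i => X i lam) hsingle
end
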